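/- arXiv:2307.04407 — 3 statements merged into one kernel-verified Lean document; each statement's English description precedes it below -/
import Mathlib

section
/- Let V be a finite set of agents with a layer function ℓ : V → ℕ. Suppose each agent i has a position trajectory r_i : ℝ → ℝ³ and a target point p_i ∈ ℝ³ such that: (i) every leader agent i (those with ℓ(i) = 0) satisfies r_i(t) → p_i as t → ∞; (ii) every non-leader agent i (ℓ(i) > 0) has a nonempty finite in-neighbor set N_i ⊆ {j ∈ V : ℓ(j) < ℓ(i)}, time-varying communication weights w_{ij} : ℝ → ℝ for j ∈ N_i with Σ_{j∈N_i} w_{ij}(t) = 1 for all t, and desired weights ϖ_{ij} ∈ ℝ with Σ_{j∈N_i} ϖ_{ij} = 1 such that w_{ij}(t) → ϖ_{ij} as t → ∞ and p_i = Σ_{j∈N_i} ϖ_{ij} p_j; (iii) every non-leader agent i asymptotically tracks its desired position, i.e. r_i(t) − Σ_{j∈N_i} w_{ij}(t) r_j(t) → 0 as t → ∞. Then r_i(t) → p_i as t → ∞ for every agent i ∈ V. -/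
open Filter Topology

/-- **Convergence of decentralized leader-follower coverage.**
Agents form a finite set `V` with a layer function `ℓ : V → ℕ` (feedforward structure).
Leaders (layer 0) converge to their target positions; every non-leader has a nonempty
in-neighbor set contained in strictly lower layers, time-varying weights summing to `1`
converging to desired weights summing to `1` with `p i = ∑ ϖ i j • p j`, and
asymptotically tracks the weighted combination of its in-neighbors' actual positions.
Then every agent's position converges to its target position. -/
theorem decentralized_coverage_convergence
    {V : Type*} [Fintype V] (ℓ : V → ℕ)
    (r : V → ℝ → EuclideanSpace ℝ (Fin 3))
    (p : V → EuclideanSpace ℝ (Fin 3))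
    (N : V → Finset V)
    (w : V → V → ℝ → ℝ) (ϖ : V → V → ℝ)
    (hleader : ∀ i, ℓ i = 0 → Tendsto (r i) atTop (𝓝 (p i)))
    (hN_nonempty : ∀ i, 0 < ℓ i → (N i).Nonempty)
    (hN_layer : ∀ i, 0 < ℓ i → ∀ j ∈ N i, ℓ j < ℓ i)
    (hw_sum : ∀ i, 0 < ℓ i → ∀ t, ∑ j ∈ N i, w i j t = 1)
    (hϖ_sum : ∀ i, 0 < ℓ i → ∑ j ∈ N i, ϖ i j = 1)
    (hw_conv : ∀ i, 0 < ℓ i → ∀ j ∈ N i, Tendsto (w i j) atTop (𝓝 (ϖ i j)))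
    (hp : ∀ i, 0 < ℓ i → p i = ∑ j ∈ N i, ϖ i j • p j)
    (htrack : ∀ i, 0 < ℓ i →
      Tendsto (fun t => r i t - ∑ j ∈ N i, w i j t • r j t) atTop (𝓝 0)) :
    ∀ i, Tendsto (r i) atTop (𝓝 (p i)) := by
  suffices h : ∀ n i, ℓ i = n → Tendsto (r i) atTop (𝓝 (p i)) from fun i => h (ℓ i) i rfl
  intro n
  induction n using Nat.strong_induction_on with
  | _ n IH =>
    intro i hi
    rcases Nat.eq_zero_or_pos n with h0 | hpos
    · exact hleader i (hi.trans h0)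
    · have hℓ : 0 < ℓ i := hi ▸ hpos
      have hsum : Tendsto (fun t => ∑ j ∈ N i, w i j t • r j t) atTop
          (𝓝 (∑ j ∈ N i, ϖ i j • p j)) := by
        apply tendsto_finset_sum
        intro j hj
        exact (hw_conv i hℓ j hj).smul (IH (ℓ j) (hi ▸ hN_layer i hℓ j hj) j rfl)
      have h2 := (htrack i hℓ).add hsum
      rw [zero_add, ← hp i hℓ] at h2
      convert h2 using 2 with t
      simp
end

section
/- Let p_1, …, p_{n+1} be an affinely independent family of points in ℝⁿ and let ϖ_1, …, ϖ_{n+1} be the unique reals with Σ_j ϖ_j = 1 and q = Σ_j ϖ_j p_j for a given point q ∈ ℝⁿ. Suppose r_1(t), …, r_{n+1}(t) ∈ ℝⁿ satisfy r_j(t) → p_j as t → ∞, a target trajectory q(t) ∈ ℝⁿ satisfies q(t) → q as t → ∞, and for every t, w_1(t), …, w_{n+1}(t) are reals with Σ_j w_j(t) = 1 and Σ_j w_j(t) r_j(t) = q(t). Then w_j(t) → ϖ_j as t → ∞ for every j. -/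
/-!
With `M(t)` the matrix whose columns are the homogeneous coordinates `(1, r_j(t))`, the
constraints on the weights say exactly `M(t) w(t) = (1, q(t))`. Affine independence of the
`p_j` makes the columns `(1, p_j)` of the limit matrix `M` linearly independent, so `M` is
invertible; matrix inversion is continuous at `M`, hence
`w(t) = M(t)⁻¹ (1, q(t)) → M⁻¹ (1, q) = ϖ`.
-/

open Filter Topology Matrix

theorem Matrix.tendsto_of_mulVec_eq {α m K : Type*} [Fintype m] [DecidableEq m] [Field K]
    [TopologicalSpace K] [IsTopologicalDivisionRing K] [T1Space K] {l : Filter α}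
    {A : α → Matrix m m K} {A₀ : Matrix m m K} {x b : α → m → K} {x₀ b₀ : m → K}
    (hA : Tendsto A l (𝓝 A₀)) (hA₀ : IsUnit A₀) (hb : Tendsto b l (𝓝 b₀))
    (hx : ∀ᶠ t in l, A t *ᵥ x t = b t) (hx₀ : A₀ *ᵥ x₀ = b₀) :
    Tendsto x l (𝓝 x₀) := by
  have hdet : A₀.det ≠ 0 := ((isUnit_iff_isUnit_det A₀).mp hA₀).ne_zero
  have hinv_det : ContinuousAt Ring.inverse A₀.det := by
    simpa only [Ring.inverse_eq_inv'] using continuousAt_inv₀ hdet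
  have hinv : Tendsto (fun t => (A t)⁻¹) l (𝓝 A₀⁻¹) :=
    (continuousAt_matrix_inv A₀ hinv_det).tendsto.comp hA
  have hdet_ev : ∀ᶠ t in l, (A t).det ≠ 0 :=
    ((continuous_id.matrix_det.tendsto A₀).comp hA).eventually_ne hdet
  have hx_eq : ∀ᶠ t in l, (A t)⁻¹ *ᵥ b t = x t := by
    filter_upwards [hx, hdet_ev] with t ht hdt
    rw [← ht, mulVec_mulVec, nonsing_inv_mul _ (isUnit_iff_ne_zero.mpr hdt), one_mulVec]
  have hx₀_eq : A₀⁻¹ *ᵥ b₀ = x₀ := by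
    rw [← hx₀, mulVec_mulVec, nonsing_inv_mul _ (isUnit_iff_ne_zero.mpr hdet), one_mulVec]
  rw [← hx₀_eq]
  exact ((continuous_fst.matrix_mulVec continuous_snd).tendsto _).comp
    (hinv.prodMk_nhds hb) |>.congr' hx_eq

section Augmented

variable {n : ℕ} {ι : Type*}

def augment (y : EuclideanSpace ℝ (Fin n)) : Fin (n + 1) → ℝ :=
  Fin.cons 1 fun k => y k

def augmentedMatrix (v : ι → EuclideanSpace ℝ (Fin n)) : Matrix (Fin (n + 1)) ι ℝ :=
  Matrix.of fun i j => augment (v j) i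

theorem continuous_augment : Continuous (augment (n := n)) := by
  refine continuous_pi fun i => Fin.cases ?_ (fun k => ?_) i
  · simpa [augment] using continuous_const
  · simpa [augment] using (EuclideanSpace.proj (𝕜 := ℝ) k).continuous

theorem continuous_augmentedMatrix :
    Continuous (augmentedMatrix : (ι → EuclideanSpace ℝ (Fin n)) → _) :=
  continuous_pi fun i => continuous_pi fun j =>
    (continuous_apply i).comp (continuous_augment.comp (continuous_apply j))

variable [Fintype ι]

theorem augmentedMatrix_mulVec (v : ι → EuclideanSpace ℝ (Fin n)) (w : ι → ℝ) :
    augmentedMatrix v *ᵥ w = Fin.cons (∑ j, w j) fun k => (∑ j, w j • v j) k := by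
  funext i
  refine Fin.cases ?_ (fun k => ?_) i <;>
    simp [augmentedMatrix, augment, mulVec, dotProduct, mul_comm]

theorem augmentedMatrix_mulVec_of_sum_eq_one (v : ι → EuclideanSpace ℝ (Fin n))
    {w : ι → ℝ} (hw : ∑ j, w j = 1) :
    augmentedMatrix v *ᵥ w = augment (∑ j, w j • v j) := by
  rw [augmentedMatrix_mulVec, hw, augment]

theorem AffineIndependent.augmentedMatrix_mulVec_injective
    {v : ι → EuclideanSpace ℝ (Fin n)} (hv : AffineIndependent ℝ v) :
    Function.Injective (augmentedMatrix v).mulVec := by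
  refine LinearMap.ker_eq_bot.mp <|
    ker_mulVecLin_eq_bot_iff (M := augmentedMatrix v).mpr fun w hw => ?_
  rw [augmentedMatrix_mulVec] at hw
  have hsum : ∑ j, w j = 0 := by simpa using congrFun hw 0
  have hcomb : ∑ j, w j • v j = 0 := by
    ext k
    simpa using congrFun hw k.succ
  funext j
  exact affineIndependent_iff.mp hv Finset.univ w hsum hcomb j (Finset.mem_univ j)

end Augmented

/-- **Convergence of communication weights to the desired weights.**
Let `p 0, …, p n` be affinely independent in `ℝⁿ` and `ϖ` the (unique) weights with
`∑ ϖ j = 1` and `q = ∑ ϖ j • p j`. If `r t j → p j`, `qt t → q`, and for every `t`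
the weights `w t` satisfy `∑ w t j = 1` and `∑ w t j • r t j = qt t`, then
`w t j → ϖ j` for every `j`. -/
theorem weights_tendsto_desired
    (n : ℕ) (p : Fin (n + 1) → EuclideanSpace ℝ (Fin n))
    (hp : AffineIndependent ℝ p)
    (q : EuclideanSpace ℝ (Fin n)) (ϖ : Fin (n + 1) → ℝ)
    (hϖ_sum : ∑ j, ϖ j = 1) (hϖ : q = ∑ j, ϖ j • p j)
    (r : ℝ → Fin (n + 1) → EuclideanSpace ℝ (Fin n))
    (hr : ∀ j, Tendsto (fun t => r t j) atTop (𝓝 (p j)))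
    (qt : ℝ → EuclideanSpace ℝ (Fin n))
    (hqt : Tendsto qt atTop (𝓝 q))
    (w : ℝ → Fin (n + 1) → ℝ)
    (hw_sum : ∀ t, ∑ j, w t j = 1)
    (hw : ∀ t, ∑ j, w t j • r t j = qt t) :
    ∀ j, Tendsto (fun t => w t j) atTop (𝓝 (ϖ j)) := by
  have hM : Tendsto (fun t => augmentedMatrix (r t)) atTop (𝓝 (augmentedMatrix p)) :=
    (continuous_augmentedMatrix.tendsto p).comp (tendsto_pi_nhds.mpr hr)
  have hb : Tendsto (fun t => augment (qt t)) atTop (𝓝 (augment q)) :=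
    (continuous_augment.tendsto q).comp hqt
  have hw_lim : Tendsto w atTop (𝓝 ϖ) :=
    tendsto_of_mulVec_eq hM
      (mulVec_injective_iff_isUnit.mp hp.augmentedMatrix_mulVec_injective) hb
      (.of_forall fun t => by rw [augmentedMatrix_mulVec_of_sum_eq_one _ (hw_sum t), hw t])
      (by rw [augmentedMatrix_mulVec_of_sum_eq_one _ hϖ_sum, hϖ])
  exact fun j => (continuous_apply j).tendsto ϖ |>.comp hw_lim
end

section
/- Let d_1, …, d_{n_d} be finitely many target points in ℝⁿ with intensities T_1, …, T_{n_d} ∈ (0,1], and let p_1, …, p_m ∈ ℝⁿ be limit vertex positions such that every target point d_h either lies in the topological interior of the convex hull of {p_1, …, p_m} or lies outside that convex hull, and at least one d_h lies in the interior. Define D̄ = {h : d_h ∈ convex hull of {p_1,…,p_m}} and the desired centroid p̄ = (Σ_{h∈D̄} T_h d_h) / |D̄|. Suppose r_1(t), …, r_m(t) ∈ ℝⁿ satisfy r_j(t) → p_j as t → ∞ for every j. Let D(t) = {h : d_h ∈ convex hull of {r_1(t),…,r_m(t)}} and, whenever D(t) is nonempty, let r̄(t) = (Σ_{h∈D(t)}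 T_h d_h) / |D(t)|. Then for all sufficiently large t the set D(t) equals D̄, and consequently r̄(t) → p̄ as t → ∞. -/
/-!
Within `ε` of the limit vertices, each convex hull lies in the open `ε`-thickening of the other
(a thickening of a convex set is convex). A target outside the closed limit hull has a ball
around it missing the limit hull, hence eventually lies outside the moving hull. A target with
an `ε`-ball inside the limit hull eventually has that ball inside the `ε`-thickening of the
moving hull, and separating the target from the moving hull by a linear functional shows that
this forces the target into the moving hull. So the enclosed set is eventually constant, and
with it the centroid.
-/

open Filter Topology Classical
open Metric Set

theorem eventually_forall_dist_lt {ι X : Type*} [Finite ι] [PseudoMetricSpace X] (p : ι → X)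
    {ε : ℝ} (hε : 0 < ε) :
    ∀ᶠ q in 𝓝 p, ∀ j, dist (q j) (p j) < ε :=
  eventually_all.2 fun j => ((continuous_apply j).tendsto p).eventually (ball_mem_nhds _ hε)

variable {E : Type*} [NormedAddCommGroup E] [NormedSpace ℝ E]

theorem ContinuousLinearMap.exists_norm_lt_one_lt_apply (f : E →L[ℝ] ℝ) {r : ℝ} (hr : r < ‖f‖) :
    ∃ x : E, ‖x‖ < 1 ∧ r < f x := by
  obtain ⟨x, hx, hrx⟩ := f.exists_lt_apply_of_lt_opNorm hr
  rcases le_or_gt 0 (f x) with hfx | hfx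
  · exact ⟨x, hx, by rwa [Real.norm_of_nonneg hfx] at hrx⟩
  · exact ⟨-x, by rwa [norm_neg], by rwa [map_neg, ← abs_of_neg hfx, ← Real.norm_eq_abs]⟩

theorem convexHull_range_subset_thickening {ι : Type*} {p q : ι → E} {ε : ℝ}
    (hq : ∀ j, dist (q j) (p j) < ε) :
    convexHull ℝ (range q) ⊆ thickening ε (convexHull ℝ (range p)) :=
  convexHull_min
    (range_subset_iff.2 fun j =>
      mem_thickening_iff.2 ⟨p j, subset_convexHull ℝ _ (mem_range_self j), hq j⟩)
    ((convex_convexHull ℝ _).thickening ε)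

theorem mem_of_ball_subset_thickening {K : Set E} {x : E} {ε : ℝ} (hKc : IsClosed K)
    (hK : Convex ℝ K) (hε : 0 < ε) (hball : ball x ε ⊆ thickening ε K) : x ∈ K := by
  by_contra hx
  -- `f < u + ‖f‖ * ε` on the `ε`-thickening of `K`, but `f` exceeds this bound on `ball x ε`.
  obtain ⟨f, u, hfK, hux⟩ := geometric_hahn_banach_closed_point hK hKc hx
  obtain ⟨v, hv, hfv⟩ := f.exists_norm_lt_one_lt_apply (r := ‖f‖ - (f x - u) / ε)
    (by have := div_pos (sub_pos.2 hux) hε; linarith)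
  have hxv : x + ε • v ∈ ball x ε := by
    rw [mem_ball, dist_eq_norm, add_sub_cancel_left, norm_smul, Real.norm_of_nonneg hε.le]
    exact mul_lt_of_lt_one_right hε hv
  obtain ⟨y, hyK, hy⟩ := mem_thickening_iff.1 (hball hxv)
  have hupper : f (x + ε • v) < u + ‖f‖ * ε :=
    calc f (x + ε • v) = f y + f (x + ε • v - y) := by rw [← map_add, add_sub_cancel]
      _ ≤ f y + ‖f‖ * ‖x + ε • v - y‖ := by
          gcongr; exact (le_abs_self _).trans (f.le_opNorm _)
      _ < u + ‖f‖ * ε := by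
          rw [← dist_eq_norm]
          exact add_lt_add_of_lt_of_le (hfK y hyK) (by gcongr)
  have hlower : u + ‖f‖ * ε < f (x + ε • v) := by
    rw [map_add, map_smul, smul_eq_mul]
    have := mul_lt_mul_of_pos_left hfv hε
    rw [mul_sub, mul_div_cancel₀ _ hε.ne'] at this
    linarith
  exact hupper.not_gt hlower

section Eventually

variable {ι : Type*} [Finite ι] {p : ι → E} {x : E}

theorem eventually_mem_convexHull_range (hx : x ∈ interior (convexHull ℝ (range p))) :
    ∀ᶠ q in 𝓝 p, x ∈ convexHull ℝ (range q) := by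
  obtain ⟨ε, hε, hball⟩ := Metric.mem_nhds_iff.1 (mem_interior_iff_mem_nhds.1 hx)
  filter_upwards [eventually_forall_dist_lt p hε] with q hq
  refine mem_of_ball_subset_thickening ((finite_range q).isClosed_convexHull ℝ)
    (convex_convexHull ℝ _) hε (hball.trans ?_)
  exact convexHull_range_subset_thickening fun j => dist_comm (q j) (p j) ▸ hq j

theorem eventually_notMem_convexHull_range (hx : x ∉ convexHull ℝ (range p)) :
    ∀ᶠ q in 𝓝 p, x ∉ convexHull ℝ (range q) := by
  obtain ⟨ε, hε, hball⟩ :=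
    isOpen_iff.1 ((finite_range p).isClosed_convexHull ℝ).isOpen_compl x hx
  filter_upwards [eventually_forall_dist_lt p hε] with q hq hxq
  obtain ⟨y, hy, hxy⟩ := mem_thickening_iff.1 (convexHull_range_subset_thickening hq hxq)
  exact hball (mem_ball'.2 hxy) hy

theorem eventually_mem_convexHull_range_iff
    (hx : x ∈ interior (convexHull ℝ (range p)) ∨ x ∉ convexHull ℝ (range p)) :
    ∀ᶠ q in 𝓝 p, (x ∈ convexHull ℝ (range q) ↔ x ∈ convexHull ℝ (range p)) := by
  rcases hx with hin | hout
  · filter_upwards [eventually_mem_convexHull_range hin] with q hq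
    exact iff_of_true hq (interior_subset hin)
  · filter_upwards [eventually_notMem_convexHull_range hout] with q hq
    exact iff_of_false hq hout

end Eventually

theorem enclosed_centroid_tendsto_general
    (n nd m : ℕ)
    (d : Fin nd → EuclideanSpace ℝ (Fin n)) (T : Fin nd → ℝ)
    (p : Fin m → EuclideanSpace ℝ (Fin n))
    (hsep : ∀ h, d h ∈ interior (convexHull ℝ (Set.range p)) ∨
      d h ∉ convexHull ℝ (Set.range p))
    (r : ℝ → Fin m → EuclideanSpace ℝ (Fin n))
    (hr : ∀ j, Tendsto (fun t => r t j) atTop (𝓝 (p j))) :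
    (∀ᶠ t in atTop,
        (Finset.univ.filter fun h => d h ∈ convexHull ℝ (Set.range (r t))) =
          (Finset.univ.filter fun h => d h ∈ convexHull ℝ (Set.range p))) ∧
      Tendsto
        (fun t =>
          (((Finset.univ.filter fun h =>
                d h ∈ convexHull ℝ (Set.range (r t))).card : ℝ))⁻¹ •
            ∑ h ∈ Finset.univ.filter fun h => d h ∈ convexHull ℝ (Set.range (r t)),
              T h • d h)
        atTop
        (𝓝 ((((Finset.univ.filter fun h =>
                d h ∈ convexHull ℝ (Set.range p)).card : ℝ))⁻¹ •
            ∑ h ∈ Finset.univ.filter fun h => d h ∈ convexHull ℝ (Set.range p),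
              T h • d h)) := by
  have hrp : Tendsto r atTop (𝓝 p) := tendsto_pi_nhds.2 hr
  have henclosed : ∀ᶠ t in atTop,
      (Finset.univ.filter fun h => d h ∈ convexHull ℝ (Set.range (r t))) =
        (Finset.univ.filter fun h => d h ∈ convexHull ℝ (Set.range p)) := by
    filter_upwards [eventually_all.2 fun h =>
      hrp.eventually (eventually_mem_convexHull_range_iff (hsep h))] with t ht
    ext h
    simpa using ht h
  refine ⟨henclosed, tendsto_const_nhds.congr' ?_⟩
  filter_upwards [henclosed] with t ht
  rw [ht]

/-- **Convergence of the observed target centroid.**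
Target points `d h` with intensities `T h ∈ (0,1]` are each either interior to the
convex hull of the limit vertex positions `p j` or outside that hull, with at least
one interior point. If the moving vertices `r t j` converge to `p j`, then the set
`D t` of targets enclosed by the moving hull eventually equals the desired set `D̄`
of targets enclosed by the limit hull, and consequently the intensity-weighted
centroid of the enclosed targets converges to the desired centroid. -/
theorem enclosed_centroid_tendsto
    (n nd m : ℕ)
    (d : Fin nd → EuclideanSpace ℝ (Fin n)) (T : Fin nd → ℝ)
    (hT : ∀ h, T h ∈ Set.Ioc (0 : ℝ) 1)
    (p : Fin m → EuclideanSpace ℝ (Fin n))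
    (hsep : ∀ h, d h ∈ interior (convexHull ℝ (Set.range p)) ∨
      d h ∉ convexHull ℝ (Set.range p))
    (hex : ∃ h, d h ∈ interior (convexHull ℝ (Set.range p)))
    (r : ℝ → Fin m → EuclideanSpace ℝ (Fin n))
    (hr : ∀ j, Tendsto (fun t => r t j) atTop (𝓝 (p j))) :
    (∀ᶠ t in atTop,
        (Finset.univ.filter fun h => d h ∈ convexHull ℝ (Set.range (r t))) =
          (Finset.univ.filter fun h => d h ∈ convexHull ℝ (Set.range p))) ∧
      Tendsto
        (fun t =>
          (((Finset.univ.filter fun h =>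
                d h ∈ convexHull ℝ (Set.range (r t))).card : ℝ))⁻¹ •
            ∑ h ∈ Finset.univ.filter fun h => d h ∈ convexHull ℝ (Set.range (r t)),
              T h • d h)
        atTop
        (𝓝 ((((Finset.univ.filter fun h =>
                d h ∈ convexHull ℝ (Set.range p)).card : ℝ))⁻¹ •
            ∑ h ∈ Finset.univ.filter fun h => d h ∈ convexHull ℝ (Set.range p),
              T h • d h)) :=
  enclosed_centroid_tendsto_general n nd m d T p hsep r hr
end
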